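/- arXiv:2510.09335 — 2 statements merged into one kernel-verified Lean document; each statement's English description precedes it below -/
import Mathlib

section
/- Let p be an odd prime and let O be a commutative ring containing an element π with π^{p-1} = -p and π not a zero divisor. Then in O[X] one has the factorization ((1 + πX)^p - 1)/(πX) = π^{p-1} · g(X) for a polynomial g(X) ∈ O[X] satisfying g(X) ≡ X^{p-1} - 1 modulo the ideal (π). -/
open Polynomial Finset

/-- For an odd prime `p` and `π` a non-zero-divisor in a commutative ring `O` with
`π^(p-1) = -p`, one has `((1 + πX)^p - 1)/(πX) = π^(p-1)·g(X)` for some `g ∈ O[X]` with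
`g ≡ X^(p-1) - 1` modulo the ideal `(π)`. -/
theorem dwork_factorization {O : Type*} [CommRing O] (p : ℕ) (hp : p.Prime) (hodd : Odd p)
    (π : O) (hπ : π ^ (p - 1) = -(p : O)) (hreg : π ∈ nonZeroDivisors O) :
    ∃ g : Polynomial O,
      (1 + C π * X) ^ p - 1 = C π * X * (C (π ^ (p - 1)) * g) ∧
      g.map (Ideal.Quotient.mk (Ideal.span ({π} : Set O))) = X ^ (p - 1) - 1 := by
  classical
  set c : ℕ → O := fun j => ((p.choose (j+1) / p : ℕ) : O) * π ^ j with hc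
  refine ⟨X ^ (p-1) - ∑ j ∈ range (p-1), C (c j) * X ^ j, ?_, ?_⟩
  · have hp1 : p - 1 + 1 = p := Nat.succ_pred_eq_of_pos hp.pos
    have key : C (π ^ (p-1)) * (X ^ (p-1) - ∑ j ∈ range (p-1), C (c j) * X ^ j)
        = ∑ j ∈ range p, C ((p.choose (j+1) : O) * π ^ j) * X ^ j := by
      rw [← hp1, Finset.sum_range_succ, hp1]
      have hlast : C ((p.choose p : O) * π ^ (p-1)) * X ^ (p-1)
          = C (π ^ (p-1)) * X ^ (p-1) := by
        simp [Nat.choose_self]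
      have hterm : ∀ j ∈ range (p-1),
          C (π ^ (p-1)) * (C (c j) * X ^ j)
            = -(C ((p.choose (j+1) : O) * π ^ j) * X ^ j) := by
        intro j hj
        simp only [mem_range] at hj
        have h1 : p ∣ p.choose (j+1) := hp.dvd_choose_self (Nat.succ_ne_zero j) (by omega)
        have hdiv : (p : O) * ((p.choose (j+1) / p : ℕ) : O) = (p.choose (j+1) : O) := by
          rw [← Nat.cast_mul, Nat.mul_div_cancel' h1]
        have hcj : π ^ (p-1) * c j = -((p.choose (j+1) : O) * π ^ j) := by
          rw [hπ, hc]
          simp only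
          rw [← hdiv]
          ring
        rw [← mul_assoc, ← C_mul, hcj, map_neg, neg_mul]
      rw [mul_sub, Finset.mul_sum, Finset.sum_congr rfl hterm, Finset.sum_neg_distrib,
        sub_neg_eq_add, hlast]
      ring
    rw [key, add_comm (1 : O[X]), add_pow]
    simp only [one_pow, mul_one]
    rw [Finset.sum_range_succ']
    simp only [pow_zero, Nat.choose_zero_right, Nat.cast_one, mul_one, one_mul]
    rw [add_sub_cancel_right, Finset.mul_sum]
    refine Finset.sum_congr rfl fun j hj => ?_
    rw [pow_succ', mul_pow, ← C_pow, C_mul, C_eq_natCast]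
    push_cast
    ring
  · rw [Polynomial.map_sub, Polynomial.map_pow, map_X, Polynomial.map_sum]
    congr 1
    have hpos : 0 < p - 1 := by have := hp.two_le; omega
    rw [Finset.sum_eq_single_of_mem 0 (mem_range.mpr hpos)]
    · simp [hc, Nat.choose_one_right, Nat.div_self hp.pos]
    · intro j _ hj
      have : (Ideal.Quotient.mk (Ideal.span ({π} : Set O))) (c j) = 0 := by
        rw [Ideal.Quotient.eq_zero_iff_mem, Ideal.mem_span_singleton]
        exact dvd_mul_of_dvd_right (dvd_pow_self π hj) _
      simp [this]
end

section
/- Let A be an associative unital ring, let σ and τ be commuting ring automorphisms of A with σ^k = id for some positive integer k, and let a, b ∈ A with b invertible, satisfying the 'flatness' relation τ(a)·b = σ(b)·a. Define p := σ^{k-1}(a)·σ^{k-2}(a)·...·σ(a)·a. Then τ(p) = b·p·b^{-1}, i.e. τ(p)·b = b·p. -/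
/-- Telescoping lemma: if `σ`, `τ` are commuting ring automorphisms with `σ^k = 1`, `b` is
invertible, and `τ(a)·b = σ(b)·a`, then `p := σ^{k-1}(a)⋯σ(a)·a` satisfies
`τ(p)·b = b·p`. -/
theorem p_curvature_covariant_constant {A : Type*} [Ring A] (k : ℕ) (hk : 0 < k)
    (σ τ : RingAut A) (hcomm : σ * τ = τ * σ) (hσk : σ ^ k = 1) (a b : A)
    (hb : IsUnit b) (hflat : τ a * b = σ b * a) :
    τ (((List.range k).reverse.map fun j => (σ ^ j) a).prod) * b =
      b * ((List.range k).reverse.map fun j => (σ ^ j) a).prod := by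
  have hc : Commute σ τ := hcomm
  have key : ∀ m : ℕ,
      τ (((List.range m).reverse.map fun j => (σ ^ j) a).prod) * b =
        (σ ^ m) b * ((List.range m).reverse.map fun j => (σ ^ j) a).prod := by
    intro m
    induction m with
    | zero => simp
    | succ m ih =>
      have hstep : ((List.range (m+1)).reverse.map fun j => (σ ^ j) a).prod =
          (σ ^ m) a * ((List.range m).reverse.map fun j => (σ ^ j) a).prod := by
        rw [List.range_succ]; simp
      -- apply σ^m to hflat
      have hflat' : τ ((σ ^ m) a) * (σ ^ m) b = (σ ^ (m+1)) b * (σ ^ m) a := by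
        have hcm : (σ ^ m) * τ = τ * (σ ^ m) := (hc.pow_left m).eq
        have := congrArg (σ ^ m) hflat
        simp only [map_mul] at this
        calc τ ((σ ^ m) a) * (σ ^ m) b
            = (τ * (σ ^ m)) a * (σ ^ m) b := rfl
          _ = ((σ ^ m) * τ) a * (σ ^ m) b := by rw [hcm]
          _ = (σ ^ m) (τ a) * (σ ^ m) b := rfl
          _ = (σ ^ m) (σ b) * (σ ^ m) a := this
          _ = (σ ^ (m+1)) b * (σ ^ m) a := by rw [pow_succ]; rfl
      rw [hstep, map_mul, mul_assoc, ih, ← mul_assoc, hflat', mul_assoc]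
  have := key k
  rwa [hσk] at this
end
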